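/- If X and Y are complete metric spaces and f₊ is lower semicontinuous on a neighbourhood of (x̄,ȳ), then, under conditions (P1)–(P2), the error bound modulus equals the uniform strict outer slope: Er f(x̄,ȳ) = \overline{|∇f|}^◇(x̄,ȳ). -/

import Mathlib

open Filter Metric Set Topology
open scoped Classical

noncomputable section

namespace HolderPaper

/-- Extended-real quotient `a / d` of an extended real by a nonnegative real,
with the convention that division by `0` yields `⊤`. -/
def equot (a : EReal) (d : ℝ) : EReal := if d = 0 then ⊤ else a * ((d⁻¹ : ℝ) : EReal)

section MetricDefs

variable {X Y : Type*} [MetricSpace X] [MetricSpace Y]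

/-- The asymmetric maximum-type distance `d_ρ((x,y),(u,v)) = max{d(x,u), ρ d(y,v)}`. -/
def drho (ρ : ℝ) (p q : X × Y) : ℝ := max (dist p.1 q.1) (ρ * dist p.2 q.2)

/-- Positive part `f₊`. -/
def fplus (f : X × Y → EReal) (p : X × Y) : EReal := max (f p) 0

/-- Condition (P1): `f(x,y) > 0` whenever `y ≠ ybar`. -/
def P1 (f : X × Y → EReal) (ybar : Y) : Prop := ∀ p : X × Y, p.2 ≠ ybar → 0 < f p

/-- Condition (P2): `liminf_{f(x,y)↓0} f(x,y)/d(y,ybar) > 0`. -/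
def P2 (f : X × Y → EReal) (ybar : Y) : Prop :=
  0 < liminf (fun p : X × Y => equot (f p) (dist p.2 ybar)) ((𝓝[>] (0 : EReal)).comap f)

/-- The lower 0-level set `S(f) = {x | f(x,ybar) ≤ 0}`. -/
def Sf (f : X × Y → EReal) (ybar : Y) : Set X := {x | f (x, ybar) ≤ 0}

/-- The error bound modulus `Er f(xbar,ybar)`:
`liminf` of `f(x,y)/d(x,S(f))` over pairs `(x,y)` with `f(x,y) > 0` as `x → xbar`. -/
def erMod (f : X × Y → EReal) (xbar : X) (ybar : Y) : EReal :=
  liminf (fun p : X × Y => equot (f p) (infDist p.1 (Sf f ybar)))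
    ((𝓝 xbar).comap Prod.fst ⊓ 𝓟 {p : X × Y | 0 < f p})

/-- `f` has an error bound w.r.t. `x` at `(xbar,ybar)` with constant `τ`. -/
def hasErrorBound (f : X × Y → EReal) (xbar : X) (ybar : Y) (τ : ℝ) : Prop :=
  ∃ U ∈ 𝓝 xbar, ∀ x ∈ U, ∀ y : Y, ((τ * infDist x (Sf f ybar) : ℝ) : EReal) ≤ fplus f (x, y)

/-- The nonlocal ρ-slope `|∇f|◇_ρ(x,y)` (set to `⊤` if `f(x,y) = ⊤`). -/
def nslope (f : X × Y → EReal) (ρ : ℝ) (p : X × Y) : EReal :=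
  if f p = ⊤ then ⊤
  else ⨆ (q : X × Y) (_ : q ≠ p), equot (max (f p - fplus f q) 0) (drho ρ p q)

/-- The (local) ρ-slope `|∇f|_ρ(x,y)`. -/
def lslope (f : X × Y → EReal) (ρ : ℝ) (p : X × Y) : EReal :=
  limsup (fun q : X × Y => equot (max (f p - f q) 0) (drho ρ q p)) (𝓝[≠] p)

/-- The uniform strict outer slope `\overline{|∇f|}^◇(xbar,ybar)`
(`lim_{ρ↓0}` of a quantity nonincreasing in `ρ`, i.e. the supremum over `ρ > 0`). -/
def uss (f : X × Y → EReal) (xbar : X) (ybar : Y) : EReal :=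
  ⨆ (ρ : ℝ) (_ : 0 < ρ),
    ⨅ (p : X × Y) (_ : dist p.1 xbar < ρ ∧ 0 < f p ∧ f p < (ρ : EReal)), nslope f ρ p

/-- The strict outer slope `\overline{|∇f|}^{>}(xbar,ybar)`. -/
def sos (f : X × Y → EReal) (xbar : X) (ybar : Y) : EReal :=
  ⨆ (ρ : ℝ) (_ : 0 < ρ),
    ⨅ (p : X × Y) (_ : dist p.1 xbar < ρ ∧ 0 < f p ∧ f p < (ρ : EReal)), lslope f ρ p

/-- The modified strict outer slope `\overline{|∇f|}^{>+}(xbar,ybar)`. -/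
def msos (f : X × Y → EReal) (xbar : X) (ybar : Y) : EReal :=
  ⨆ (ρ : ℝ) (_ : 0 < ρ),
    ⨅ (p : X × Y) (_ : dist p.1 xbar < ρ ∧ 0 < f p ∧ f p < (ρ : EReal)),
      max (lslope f ρ p) (equot (f p) (dist p.1 xbar))

/-- Graph of a set-valued mapping. -/
def gph (F : X → Set Y) : Set (X × Y) := {p | p.2 ∈ F p.1}

/-- Inverse image `F⁻¹(ybar)`. -/
def Finv (F : X → Set Y) (ybar : Y) : Set X := {x | ybar ∈ F x}

/-- The function `f(x,y) = (d(y,ybar))^q` on `gph F`, `+∞` elsewhere. -/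
def fFq (F : X → Set Y) (ybar : Y) (qq : ℝ) : X × Y → EReal :=
  fun p => if p ∈ gph F then ((dist p.2 ybar ^ qq : ℝ) : EReal) else ⊤

/-- The function `f(x,y) = ‖y - ybar‖` on `gph F`, `+∞` elsewhere (case `q = 1`). -/
def fF1 (F : X → Set Y) (ybar : Y) : X × Y → EReal :=
  fun p => if p ∈ gph F then ((dist p.2 ybar : ℝ) : EReal) else ⊤

/-- The ρ-slope `|∇F|_ρ(x,y)` of a set-valued mapping at `(x,y) ∈ gph F`. -/
def FslopeR (F : X → Set Y) (ybar : Y) (ρ : ℝ) (p : X × Y) : EReal :=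
  limsup (fun u : X × Y => equot ((max (dist p.2 ybar - dist u.2 ybar) 0 : ℝ) : EReal) (drho ρ u p))
    (𝓝[gph F \ {p}] p)

/-- The nonlocal (q,ρ)-slope `|∇F|◇_{q,ρ}(x,y)` of a set-valued mapping. -/
def FnslopeQ (F : X → Set Y) (ybar : Y) (qq ρ : ℝ) (p : X × Y) : EReal :=
  ⨆ (u : X × Y) (_ : u ∈ gph F ∧ u ≠ p),
    equot ((max (dist p.2 ybar ^ qq - dist u.2 ybar ^ qq) 0 : ℝ) : EReal) (drho ρ u p)

/-- The uniform strict q-slope `\overline{|∇F|}^◇_q(xbar,ybar)`. -/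
def ussFq (F : X → Set Y) (xbar : X) (ybar : Y) (qq : ℝ) : EReal :=
  ⨆ (ρ : ℝ) (_ : 0 < ρ),
    ⨅ (p : X × Y)
      (_ : p ∈ gph F ∧ dist p.1 xbar < ρ ∧ dist p.2 ybar < ρ ∧ p.1 ∉ Finv F ybar),
      FnslopeQ F ybar qq ρ p

/-- The strict q-slope `\overline{|∇F|}_q(xbar,ybar)`. -/
def sosFq (F : X → Set Y) (xbar : X) (ybar : Y) (qq : ℝ) : EReal :=
  (qq : EReal) *
    ⨆ (ρ : ℝ) (_ : 0 < ρ),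
      ⨅ (p : X × Y)
        (_ : p ∈ gph F ∧ dist p.1 xbar < ρ ∧ dist p.2 ybar < ρ ∧ p.1 ∉ Finv F ybar),
        ((dist p.2 ybar ^ (qq - 1) : ℝ) : EReal) * FslopeR F ybar ρ p

/-- The modified strict q-slope `\overline{|∇F|}^{+}_q(xbar,ybar)`. -/
def msosFq (F : X → Set Y) (xbar : X) (ybar : Y) (qq : ℝ) : EReal :=
  ⨆ (ρ : ℝ) (_ : 0 < ρ),
    ⨅ (p : X × Y)
      (_ : p ∈ gph F ∧ dist p.1 xbar < ρ ∧ dist p.2 ybar < ρ ∧ p.1 ∉ Finv F ybar),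
      max (((qq * dist p.2 ybar ^ (qq - 1) : ℝ) : EReal) * FslopeR F ybar ρ p)
        (equot ((dist p.2 ybar ^ qq : ℝ) : EReal) (dist p.1 xbar))

/-- The Hölder subregularity modulus of order `q`:
`liminf_{x→xbar, x∉F⁻¹(ybar)} (d(ybar,F(x)))^q / d(x,F⁻¹(ybar))`
(with `d(ybar,∅) = +∞`). -/
def srq (F : X → Set Y) (xbar : X) (ybar : Y) (qq : ℝ) : EReal :=
  liminf
    (fun x : X =>
      equot (if F x = ∅ then ⊤ else ((infDist ybar (F x) ^ qq : ℝ) : EReal))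
        (infDist x (Finv F ybar)))
    (𝓝[(Finv F ybar)ᶜ] xbar)

end MetricDefs

section NormedDefs

variable {X Y : Type*} [NormedAddCommGroup X] [NormedSpace ℝ X]
  [NormedAddCommGroup Y] [NormedSpace ℝ Y]

/-- The Fréchet subdifferential of `f : X × Y → ℝ∪{+∞}` at `p`, as a set of pairs of
continuous linear functionals (empty when `f p = ⊤`). -/
def fsubdiff (f : X × Y → EReal) (p : X × Y) : Set ((X →L[ℝ] ℝ) × (Y →L[ℝ] ℝ)) :=
  {φ | f p ≠ ⊤ ∧ 0 ≤ liminf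
      (fun q : X × Y =>
        equot (f q - f p - ((φ.1 (q.1 - p.1) + φ.2 (q.2 - p.2) : ℝ) : EReal)) (dist q p))
      (𝓝[≠] p)}

/-- The subdifferential ρ-slope `|∂f|_ρ(x,y)`. -/
def sdslope (f : X × Y → EReal) (ρ : ℝ) (p : X × Y) : EReal :=
  ⨅ (φ : (X →L[ℝ] ℝ) × (Y →L[ℝ] ℝ)) (_ : φ ∈ fsubdiff f p ∧ ‖φ.2‖ < ρ), (‖φ.1‖ : EReal)

/-- The strict outer subdifferential slope `\overline{|∂f|}^{>}(xbar,ybar)`. -/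
def ssds (f : X × Y → EReal) (xbar : X) (ybar : Y) : EReal :=
  ⨆ (ρ : ℝ) (_ : 0 < ρ),
    ⨅ (p : X × Y) (_ : dist p.1 xbar < ρ ∧ 0 < f p ∧ f p < (ρ : EReal)), sdslope f ρ p

/-- The modified strict outer subdifferential slope `\overline{|∂f|}^{>+}(xbar,ybar)`. -/
def mssds (f : X × Y → EReal) (xbar : X) (ybar : Y) : EReal :=
  ⨆ (ρ : ℝ) (_ : 0 < ρ),
    ⨅ (p : X × Y) (_ : dist p.1 xbar < ρ ∧ 0 < f p ∧ f p < (ρ : EReal)),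
      max (sdslope f ρ p) (equot (f p) (dist p.1 xbar))

/-- `f` is convex on the set `U` (with extended-real values). -/
def convexOnE (U : Set (X × Y)) (f : X × Y → EReal) : Prop :=
  Convex ℝ U ∧ ∀ p ∈ U, ∀ q ∈ U, ∀ t : ℝ, 0 ≤ t → t ≤ 1 →
    f (t • p + (1 - t) • q) ≤ (t : EReal) * f p + ((1 - t : ℝ) : EReal) * f q

/-- The Fréchet normal cone to `Ω ⊂ X × Y` at `p ∈ Ω`. -/
def ncone (Ω : Set (X × Y)) (p : X × Y) : Set ((X →L[ℝ] ℝ) × (Y →L[ℝ] ℝ)) :=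
  {φ | limsup
      (fun q : X × Y =>
        equot (((φ.1 (q.1 - p.1) + φ.2 (q.2 - p.2) : ℝ)) : EReal) (dist q p))
      (𝓝[Ω \ {p}] p) ≤ 0}

/-- The Fréchet coderivative `D*F(x,y)(y*)`. -/
def coderiv (F : X → Set Y) (p : X × Y) (ys : Y →L[ℝ] ℝ) : Set (X →L[ℝ] ℝ) :=
  {xs | (xs, -ys) ∈ ncone (gph F) p}

/-- The (normalized) duality mapping `J(y) = {y* : ‖y*‖ = 1, ⟨y*,y⟩ = ‖y‖}`. -/
def Jdual (y : Y) : Set (Y →L[ℝ] ℝ) := {ys | ‖ys‖ = 1 ∧ ys y = ‖y‖}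

/-- The subdifferential ρ-slope of `F` at `(x,y) ∈ gph F`:
`inf{‖x*‖ : x* ∈ D*F(x,y)(J(y-ybar) + ρ𝔹*)}`. -/
def FsdSlope (F : X → Set Y) (ybar : Y) (ρ : ℝ) (p : X × Y) : EReal :=
  ⨅ (xs : X →L[ℝ] ℝ)
    (_ : ∃ ws : Y →L[ℝ] ℝ, (∃ ys ∈ Jdual (p.2 - ybar), ‖ws - ys‖ ≤ ρ) ∧ xs ∈ coderiv F p ws),
    (‖xs‖ : EReal)

/-- `ξ_q(y) = ‖y - ybar‖^{1-q}/q`. -/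
def xiq (qq : ℝ) (ybar y : Y) : ℝ := ‖y - ybar‖ ^ (1 - qq) / qq

/-- The strict subdifferential q-slope `\overline{|∂F|}_q(xbar,ybar)`. -/
def ssdFq (F : X → Set Y) (xbar : X) (ybar : Y) (qq : ℝ) : EReal :=
  (qq : EReal) *
    ⨆ (ρ : ℝ) (_ : 0 < ρ),
      ⨅ (p : X × Y)
        (_ : p ∈ gph F ∧ ‖p.1 - xbar‖ < ρ ∧ ‖p.2 - ybar‖ < ρ ∧ p.1 ∉ Finv F ybar),
        ((‖p.2 - ybar‖ ^ (qq - 1) : ℝ) : EReal) * FsdSlope F ybar (xiq qq ybar p.2 * ρ) p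

/-- The modified strict subdifferential q-slope `\overline{|∂F|}^{+}_q(xbar,ybar)`. -/
def msdFq (F : X → Set Y) (xbar : X) (ybar : Y) (qq : ℝ) : EReal :=
  ⨆ (ρ : ℝ) (_ : 0 < ρ),
    ⨅ (p : X × Y)
      (_ : p ∈ gph F ∧ ‖p.1 - xbar‖ < ρ ∧ ‖p.2 - ybar‖ < ρ ∧ p.1 ∉ Finv F ybar),
      max (((qq * ‖p.2 - ybar‖ ^ (qq - 1) : ℝ) : EReal) * FsdSlope F ybar (xiq qq ybar p.2 * ρ) p)
        (equot ((‖p.2 - ybar‖ ^ qq : ℝ) : EReal) ‖p.1 - xbar‖)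

/-- The normalized ε-enlargement `J^q_ε(y)` of the q-duality mapping
`J^q(y) = q‖y‖^{q-1} J(y)`. -/
def JqEps (qq ε : ℝ) (y : Y) : Set (Y →L[ℝ] ℝ) :=
  {ws | ∃ us ∈ Jdual y, ∃ vs : Y →L[ℝ] ℝ, ‖vs‖ ≤ 1 ∧
    (qq * ‖y‖ ^ (qq - 1)) • us + ε • vs ≠ 0 ∧
    ws = ‖(qq * ‖y‖ ^ (qq - 1)) • us + ε • vs‖⁻¹ • ((qq * ‖y‖ ^ (qq - 1)) • us + ε • vs)}

/-- The constant `β` of Li and Mordukhovich. -/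
def betaLM (F : X → Set Y) (xbar : X) (ybar : Y) (qq : ℝ) : EReal :=
  ⨆ (ε : ℝ) (_ : 0 < ε),
    ⨅ (p : X × Y) (xs : X →L[ℝ] ℝ)
      (_ : p ∈ gph F ∧ p.1 ∉ Finv F ybar ∧ ‖p.1 - xbar‖ < ε ∧
           ‖p.2 - ybar‖ < min ε (‖p.1 - xbar‖ ^ (1 / 2 : ℝ)) ∧
           ∃ ws ∈ JqEps qq ε (p.2 - ybar), xs ∈ coderiv F p ws),
      ((qq * ‖xs‖ * ‖p.2 - ybar‖ ^ (qq - 1) : ℝ) : EReal)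

end NormedDefs

end HolderPaper

/-!
`Er ≤ slope`: a point `p = (x, y)` near `x̄` with small value `f p > 0` lies within `f p / γ` of
`S(f)` in `x` (error bound) and, by (P2), within `f p / c` of `ȳ` in `y`. Once `ρ ≤ c / γ`, the
point `(w, ȳ)` with `w ∈ S(f)` nearest to `x` is at `d_ρ`-distance at most `f p / γ`, so the
nonlocal slope at `p` is at least `γ`.

`slope ≤ Er`: if `f p₀ < γ d(x₀, S(f))` at `p₀ = (x₀, y₀)`, Ekeland's variational principle
applied to `f₊` and the weighted metric `γ d_ρ` gives a point `q` with
`f₊ q + γ d_ρ(p₀, q) ≤ f p₀` at which `f₊ + γ d_ρ(q, ·)` is minimal. By (P1), `f q ≤ 0` would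
put `q` in `S(f) × {ȳ}`, too close to `p₀`; so `f q > 0`, and minimality says that the nonlocal
slope at `q` is at most `γ`.
-/

theorem summable_of_le_sub_succ {a b : ℕ → ℝ} (hb : ∀ n, 0 ≤ b n) (ha : ∀ n, 0 ≤ a n)
    (h : ∀ n, b n ≤ a n - a (n + 1)) : Summable b :=
  summable_of_sum_range_le hb fun n => calc
    ∑ i ∈ Finset.range n, b i ≤ ∑ i ∈ Finset.range n, (a i - a (i + 1)) :=
      Finset.sum_le_sum fun i _ => h i
    _ = a 0 - a n := Finset.sum_range_sub' a n
    _ ≤ a 0 := sub_le_self _ (ha n)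

theorem eventually_mul_lt_nhdsGT (k : ℝ) {b : ℝ} (hb : 0 < b) :
    ∀ᶠ δ in 𝓝[>] (0 : ℝ), k * δ < b :=
  nhdsWithin_le_nhds <| ((continuous_const_mul k).tendsto' 0 0 (mul_zero k)).eventually
    (gt_mem_nhds hb)

theorem EReal.exists_forall_le_add {ι : Type*} {s : Set ι} {g : ι → EReal}
    (hg : ∀ i ∈ s, 0 ≤ g i) {i₀ : ι} (hi₀ : i₀ ∈ s) (hgi₀ : g i₀ ≠ ⊤) {ε : ℝ} (hε : 0 < ε) :
    ∃ i ∈ s, ∀ j ∈ s, g i ≤ g j + ε := by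
  have hm_top : ⨅ j ∈ s, g j ≠ ⊤ := ne_top_of_le_ne_top hgi₀ (iInf₂_le i₀ hi₀)
  have hm_bot : ⨅ j ∈ s, g j ≠ ⊥ := ne_bot_of_le_ne_bot EReal.zero_ne_bot (le_iInf₂ hg)
  obtain ⟨μ, hμ⟩ : ∃ μ : ℝ, (μ : EReal) = ⨅ j ∈ s, g j := ⟨_, EReal.coe_toReal hm_top hm_bot⟩
  obtain ⟨i, hi⟩ := iInf_lt_iff.1 (show ⨅ j ∈ s, g j < (μ + ε : ℝ) by
    rw [← hμ]; exact_mod_cast lt_add_of_pos_right μ hε)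
  obtain ⟨hi, hlt⟩ := iInf_lt_iff.1 hi
  refine ⟨i, hi, fun j hj => hlt.le.trans ?_⟩
  rw [EReal.coe_add, hμ]
  exact add_le_add_left (iInf₂_le j hj) _

section Ekeland

variable {Z : Type*} {D : Z → Z → ℝ} {g : Z → EReal} {W : Set Z}

def ekelandSet (D : Z → Z → ℝ) (g : Z → EReal) (W : Set Z) (p : Z) : Set Z :=
  {u | u ∈ W ∧ g u + D p u ≤ g p}

theorem self_mem_ekelandSet (hD : ∀ p, D p p = 0) {p : Z} (hp : p ∈ W) :
    p ∈ ekelandSet D g W p :=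
  ⟨hp, by simp [hD]⟩

theorem le_of_mem_ekelandSet (hD : ∀ p q, 0 ≤ D p q) {p u : Z} (hu : u ∈ ekelandSet D g W p) :
    g u ≤ g p :=
  (le_add_of_nonneg_right (EReal.coe_nonneg.2 (hD p u))).trans hu.2

theorem ekelandSet_subset (hD : ∀ p q r, D p r ≤ D p q + D q r) {p u : Z}
    (hu : u ∈ ekelandSet D g W p) : ekelandSet D g W u ⊆ ekelandSet D g W p := by
  rintro v ⟨hvW, hv⟩
  refine ⟨hvW, ?_⟩
  calc g v + D p v ≤ g v + D u v + D p u := by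
        rw [add_assoc, ← EReal.coe_add]
        gcongr
        linarith [hD p u v]
    _ ≤ g u + D p u := by gcongr
    _ ≤ g p := hu.2

theorem isClosed_ekelandSet [TopologicalSpace Z] (hW : IsClosed W)
    (hg : LowerSemicontinuousOn g W) {p : Z} (hD : Continuous (D p)) :
    IsClosed (ekelandSet D g W p) := by
  have hlsc : LowerSemicontinuousOn (fun u => g u + D p u) W :=
    hg.add' (continuous_coe_real_ereal.comp hD).continuousOn.lowerSemicontinuousOn
      fun u _ => EReal.continuousAt_add (.inr (EReal.coe_ne_bot _)) (.inr (EReal.coe_ne_top _))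
  obtain ⟨v, hv, hWv⟩ := lowerSemicontinuousOn_iff_preimage_Iic.1 hlsc (g p)
  rw [show ekelandSet D g W p = W ∩ v from hWv]
  exact hW.inter hv

theorem exists_ekeland_seq (hD0 : ∀ p q, 0 ≤ D p q) (hDself : ∀ p, D p p = 0)
    (hDtri : ∀ p q r, D p r ≤ D p q + D q r) (hg0 : ∀ p ∈ W, 0 ≤ g p) {p₀ : Z} (hp₀ : p₀ ∈ W)
    (hgp₀ : g p₀ ≠ ⊤) :
    ∃ x : ℕ → Z, x 0 = p₀ ∧ ∀ n, x (n + 1) ∈ ekelandSet D g W (x n) ∧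
      ∀ v ∈ ekelandSet D g W (x n), g (x (n + 1)) ≤ g v + (1 / (n + 1) : ℝ) := by
  have step : ∀ n : ℕ, ∀ p ∈ ekelandSet D g W p₀, ∃ u ∈ ekelandSet D g W p,
      ∀ v ∈ ekelandSet D g W p, g u ≤ g v + (1 / (n + 1) : ℝ) := fun n p hp =>
    EReal.exists_forall_le_add (fun v hv => hg0 v hv.1) (self_mem_ekelandSet hDself hp.1)
      (ne_top_of_le_ne_top hgp₀ (le_of_mem_ekelandSet hD0 hp)) Nat.one_div_pos_of_nat
  choose! next hnext_mem hnext_le using step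
  let x : ℕ → Z := fun n => Nat.rec p₀ (fun k p => next k p) n
  have hx : ∀ n, x n ∈ ekelandSet D g W p₀ := by
    intro n
    induction n with
    | zero => exact self_mem_ekelandSet hDself hp₀
    | succ n ih => exact ekelandSet_subset hDtri ih (hnext_mem n (x n) ih)
  exact ⟨x, rfl, fun n => ⟨hnext_mem n (x n) (hx n), hnext_le n (x n) (hx n)⟩⟩

theorem cauchySeq_of_mem_ekelandSet [PseudoMetricSpace Z] (hD0 : ∀ p q, 0 ≤ D p q) {K : ℝ}
    (hK : ∀ p q, dist p q ≤ K * D p q) (hg0 : ∀ p ∈ W, 0 ≤ g p) {x : ℕ → Z} (hx0 : x 0 ∈ W)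
    (hgx0 : g (x 0) ≠ ⊤) (hx : ∀ n, x (n + 1) ∈ ekelandSet D g W (x n)) : CauchySeq x := by
  have hxW : ∀ n, x n ∈ W := by
    rintro (_ | n)
    exacts [hx0, (hx n).1]
  have hanti : Antitone (g ∘ x) :=
    antitone_nat_of_succ_le fun n => le_of_mem_ekelandSet hD0 (hx n)
  have hfin : ∀ n, g (x n) = ((g (x n)).toReal : EReal) := fun n =>
    (EReal.coe_toReal (ne_top_of_le_ne_top hgx0 (hanti n.zero_le))
      (ne_bot_of_le_ne_bot EReal.zero_ne_bot (hg0 _ (hxW n)))).symm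
  have hsum : Summable fun n => D (x n) (x (n + 1)) := by
    refine summable_of_le_sub_succ (fun n => hD0 _ _)
      (fun n => EReal.toReal_nonneg (hg0 _ (hxW n))) fun n => ?_
    have h := (hx n).2
    rw [hfin n, hfin (n + 1), ← EReal.coe_add, EReal.coe_le_coe_iff] at h
    linarith
  exact cauchySeq_of_summable_dist <|
    (hsum.mul_left K).of_nonneg_of_le (fun n => dist_nonneg) fun n => hK _ _

theorem exists_ekeland_point [PseudoMetricSpace Z] [CompleteSpace Z]
    (hD0 : ∀ p q, 0 ≤ D p q) (hDself : ∀ p, D p p = 0)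
    (hDtri : ∀ p q r, D p r ≤ D p q + D q r) (hDcont : ∀ p, Continuous (D p)) {K : ℝ}
    (hK : ∀ p q, dist p q ≤ K * D p q) (hW : IsClosed W) (hg : LowerSemicontinuousOn g W)
    (hg0 : ∀ p ∈ W, 0 ≤ g p) {p₀ : Z} (hp₀ : p₀ ∈ W) (hgp₀ : g p₀ ≠ ⊤) :
    ∃ q ∈ W, g q + D p₀ q ≤ g p₀ ∧ ∀ u ∈ W, g q ≤ g u + D q u := by
  obtain ⟨x, rfl, hx⟩ := exists_ekeland_seq hD0 hDself hDtri hg0 hp₀ hgp₀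
  have hchain : ∀ n m, n < m → x m ∈ ekelandSet D g W (x n) := fun n m hnm => by
    induction m, hnm using Nat.le_induction with
    | base => exact (hx n).1
    | succ m _ ih => exact ekelandSet_subset hDtri ih (hx m).1
  obtain ⟨q, hq⟩ := cauchySeq_tendsto_of_complete <|
    cauchySeq_of_mem_ekelandSet hD0 hK hg0 hp₀ hgp₀ fun n => (hx n).1
  have hqE : ∀ n, q ∈ ekelandSet D g W (x n) := fun n =>
    (isClosed_ekelandSet hW hg (hDcont _)).mem_of_tendsto hq
      ((Filter.eventually_gt_atTop n).mono (hchain n))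
  refine ⟨q, (hqE 0).1, (hqE 0).2, fun u hu => ?_⟩
  by_contra! hlt
  have hq_le : ∀ n : ℕ, g q ≤ g u + (1 / (n + 1) : ℝ) := fun n =>
    (le_of_mem_ekelandSet hD0 (hqE (n + 1))).trans
      ((hx n).2 u (ekelandSet_subset hDtri (hqE n) ⟨hu, hlt.le⟩))
  have hq_top : g q ≠ ⊤ := ne_top_of_le_ne_top hgp₀ (le_of_mem_ekelandSet hD0 (hqE 0))
  have hu_top : g u ≠ ⊤ := fun h => by simp [h] at hlt
  lift g q to ℝ using ⟨hq_top, ne_bot_of_le_ne_bot EReal.zero_ne_bot (hg0 _ (hqE 0).1)⟩ with bq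
  lift g u to ℝ using ⟨hu_top, ne_bot_of_le_ne_bot EReal.zero_ne_bot (hg0 _ hu)⟩ with bu
  norm_cast at hlt
  obtain ⟨n, hn⟩ := exists_nat_one_div_lt (show 0 < bq - bu by linarith [hD0 q u])
  have h : bq ≤ bu + 1 / (n + 1) := by exact_mod_cast hq_le n
  linarith

end Ekeland

namespace HolderPaper

theorem le_equot_iff {γ d : ℝ} {a : EReal} (hd : 0 < d) :
    (γ : EReal) ≤ equot a d ↔ ((γ * d : ℝ) : EReal) ≤ a := by
  rw [equot, if_neg hd.ne', EReal.coe_inv, EReal.coe_mul]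
  exact EReal.le_div_iff_mul_le (by exact_mod_cast hd) (EReal.coe_ne_top d)

theorem equot_le_iff {γ d : ℝ} {a : EReal} (hd : 0 < d) :
    equot a d ≤ γ ↔ a ≤ ((γ * d : ℝ) : EReal) := by
  rw [equot, if_neg hd.ne', EReal.coe_inv, EReal.coe_mul, mul_comm (γ : EReal)]
  exact EReal.div_le_iff_le_mul (by exact_mod_cast hd) (EReal.coe_ne_top d)

theorem le_equot {γ d : ℝ} {a : EReal} (hd : 0 ≤ d) (h : ((γ * d : ℝ) : EReal) ≤ a) :
    (γ : EReal) ≤ equot a d := by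
  rcases hd.eq_or_lt with rfl | hd
  · simp [equot]
  · exact (le_equot_iff hd).2 h

theorem mul_lt_of_lt_equot {γ d : ℝ} {a : EReal} (hd : 0 ≤ d) (ha : 0 < a)
    (h : (γ : EReal) < equot a d) : ((γ * d : ℝ) : EReal) < a := by
  rcases hd.eq_or_lt with rfl | hd
  · simpa using ha
  · exact lt_of_not_ge fun h' => h.not_ge ((equot_le_iff hd).2 h')

section Drho

variable {X Y : Type*} [MetricSpace X] [MetricSpace Y] {ρ : ℝ}

theorem drho_nonneg (p q : X × Y) : 0 ≤ drho ρ p q :=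
  dist_nonneg.trans (le_max_left _ _)

theorem drho_self (p : X × Y) : drho ρ p p = 0 := by
  simp [drho]

theorem dist_fst_le_drho (p q : X × Y) : dist p.1 q.1 ≤ drho ρ p q :=
  le_max_left _ _

theorem mul_dist_snd_le_drho (p q : X × Y) : ρ * dist p.2 q.2 ≤ drho ρ p q :=
  le_max_right _ _

theorem drho_pos (hρ : 0 < ρ) {p q : X × Y} (h : p ≠ q) : 0 < drho ρ p q := by
  rcases eq_or_ne p.1 q.1 with h1 | h1
  · have h2 : p.2 ≠ q.2 := fun h2 => h (Prod.ext h1 h2)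
    exact (mul_pos hρ (dist_pos.2 h2)).trans_le (mul_dist_snd_le_drho p q)
  · exact (dist_pos.2 h1).trans_le (dist_fst_le_drho p q)

theorem drho_triangle (hρ : 0 ≤ ρ) (p q r : X × Y) : drho ρ p r ≤ drho ρ p q + drho ρ q r := by
  refine max_le ((dist_triangle _ _ _).trans (add_le_add (le_max_left _ _) (le_max_left _ _))) ?_
  calc ρ * dist p.2 r.2 ≤ ρ * dist p.2 q.2 + ρ * dist q.2 r.2 := by
        rw [← mul_add]; exact mul_le_mul_of_nonneg_left (dist_triangle _ _ _) hρ
    _ ≤ drho ρ p q + drho ρ q r := add_le_add (le_max_right _ _) (le_max_right _ _)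

theorem dist_le_drho (hρ : 0 < ρ) (p q : X × Y) : dist p q ≤ max 1 ρ⁻¹ * drho ρ p q := by
  refine max_le ?_ ?_
  · exact (dist_fst_le_drho p q).trans
      (le_mul_of_one_le_left (drho_nonneg p q) (le_max_left _ _))
  · calc dist p.2 q.2 = ρ⁻¹ * (ρ * dist p.2 q.2) := by field_simp
      _ ≤ max 1 ρ⁻¹ * drho ρ p q :=
        mul_le_mul (le_max_right _ _) (mul_dist_snd_le_drho p q)
          (mul_nonneg hρ.le dist_nonneg) (zero_le_one.trans (le_max_left _ _))

theorem dist_lt_of_drho_le (hρ : 0 < ρ) {a p u : X × Y} {t r : ℝ} (hu : drho ρ p u ≤ t)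
    (h1 : dist p.1 a.1 + t < r) (h2 : dist p.2 a.2 + t / ρ < r) : dist u a < r := by
  refine max_lt ?_ ?_
  · calc dist u.1 a.1 ≤ dist p.1 u.1 + dist p.1 a.1 := dist_triangle_left _ _ _
      _ < r := by linarith [dist_fst_le_drho (ρ := ρ) p u]
  · calc dist u.2 a.2 ≤ dist p.2 u.2 + dist p.2 a.2 := dist_triangle_left _ _ _
      _ ≤ t / ρ + dist p.2 a.2 := by
        gcongr
        rw [le_div_iff₀' hρ]
        exact (mul_dist_snd_le_drho p u).trans hu
      _ < r := by linarith

theorem continuous_drho (p : X × Y) : Continuous (drho ρ p) :=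
  (continuous_const.dist continuous_fst).max
    (continuous_const.mul (continuous_const.dist continuous_snd))

theorem exists_drho_ekeland_point [CompleteSpace X] [CompleteSpace Y] {g : X × Y → EReal}
    {W : Set (X × Y)} (hW : IsClosed W) (hg : LowerSemicontinuousOn g W)
    (hg0 : ∀ p ∈ W, 0 ≤ g p) {γ : ℝ} (hγ : 0 < γ) (hρ : 0 < ρ) {p₀ : X × Y} (hp₀ : p₀ ∈ W)
    (hgp₀ : g p₀ ≠ ⊤) :
    ∃ q ∈ W, g q + ((γ * drho ρ p₀ q : ℝ) : EReal) ≤ g p₀ ∧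
      ∀ u ∈ W, g q ≤ g u + ((γ * drho ρ q u : ℝ) : EReal) :=
  exists_ekeland_point (D := fun u v => γ * drho ρ u v)
    (fun u v => mul_nonneg hγ.le (drho_nonneg u v)) (fun u => by simp [drho_self])
    (fun u v w => by
      rw [← mul_add]
      exact mul_le_mul_of_nonneg_left (drho_triangle hρ.le u v w) hγ.le)
    (fun u => continuous_const.mul (continuous_drho u)) (K := max 1 ρ⁻¹ / γ)
    (fun u v => by
      rw [show max 1 ρ⁻¹ / γ * (γ * drho ρ u v) = max 1 ρ⁻¹ * drho ρ u v by field_simp]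
      exact dist_le_drho hρ u v)
    hW hg hg0 hp₀ hgp₀

end Drho

section ErrorBound

variable {X Y : Type*} [MetricSpace X] {f : X × Y → EReal} {xbar : X} {ybar : Y}

theorem le_erMod {γ : ℝ} (h : ∃ δ > 0, ∀ p : X × Y, dist p.1 xbar < δ → 0 < f p →
      ((γ * infDist p.1 (Sf f ybar) : ℝ) : EReal) ≤ f p) :
    (γ : EReal) ≤ erMod f xbar ybar := by
  obtain ⟨δ, hδ, h⟩ := h
  refine Filter.le_liminf_of_le (by isBoundedDefault) ?_
  rw [Filter.eventually_inf_principal]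
  filter_upwards [Filter.preimage_mem_comap (Metric.ball_mem_nhds xbar hδ)] with p hp hfp
  exact le_equot infDist_nonneg (h p hp hfp)

theorem exists_mul_infDist_lt_of_lt_erMod {γ : ℝ} (h : (γ : EReal) < erMod f xbar ybar) :
    ∃ δ > 0, ∀ p : X × Y, dist p.1 xbar < δ → 0 < f p →
      ((γ * infDist p.1 (Sf f ybar) : ℝ) : EReal) < f p := by
  have hev := Filter.eventually_lt_of_lt_liminf h
  rw [Filter.eventually_inf_principal, Filter.eventually_comap] at hev
  obtain ⟨δ, hδ, hball⟩ := Metric.eventually_nhds_iff.1 hev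
  exact ⟨δ, hδ, fun p hp hfp => mul_lt_of_lt_equot infDist_nonneg hfp (hball hp p rfl hfp)⟩

theorem erMod_nonneg : 0 ≤ erMod f xbar ybar := by
  simpa using le_erMod (f := f) (xbar := xbar) (ybar := ybar) (γ := 0)
    ⟨1, one_pos, fun p _ hfp => by simpa using hfp.le⟩

end ErrorBound

theorem P2.exists_mul_dist_le {X Y : Type*} [MetricSpace Y] {f : X × Y → EReal} {ybar : Y}
    (hP2 : P2 f ybar) :
    ∃ c : ℝ, 0 < c ∧ ∃ σ : ℝ, 0 < σ ∧ ∀ p : X × Y, 0 < f p → f p < σ →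
      ((c * dist p.2 ybar : ℝ) : EReal) ≤ f p := by
  obtain ⟨c, hc0, hc⟩ := EReal.exists_between_coe_real hP2
  have hev := Filter.eventually_comap.1 (Filter.eventually_lt_of_lt_liminf hc)
  obtain ⟨u, hu, hsub⟩ := (mem_nhdsGT_iff_exists_Ioo_subset' EReal.zero_lt_top).1 hev
  obtain ⟨σ, hσ0, hσu⟩ := EReal.exists_between_coe_real hu
  refine ⟨c, by exact_mod_cast hc0, σ, by exact_mod_cast hσ0, fun p hp hpσ => ?_⟩
  rcases (dist_nonneg : 0 ≤ dist p.2 ybar).eq_or_lt with hd | hd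
  · rw [← hd, mul_zero]
    exact hp.le
  · exact (le_equot_iff hd).1 (hsub ⟨hp, hpσ.trans hσu⟩ p rfl).le

section Slopes

variable {X Y : Type*} [MetricSpace X] [MetricSpace Y] {f : X × Y → EReal} {xbar : X} {ybar : Y}

theorem le_nslope_of_nonpos {ρ γ : ℝ} {p q : X × Y} (hp : 0 < f p) (hq : f q ≤ 0)
    (h : ((γ * drho ρ p q : ℝ) : EReal) ≤ f p) : (γ : EReal) ≤ nslope f ρ p := by
  rw [nslope]
  split_ifs
  · exact le_top
  have hqp : q ≠ p := by
    rintro rfl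
    exact hq.not_gt hp
  refine le_iSup₂_of_le q hqp (le_equot (drho_nonneg p q) ?_)
  rwa [fplus, max_eq_right hq, sub_zero, max_eq_left hp.le]

theorem nslope_le {ρ γ : ℝ} (hρ : 0 < ρ) (hγ : 0 ≤ γ) {p : X × Y} (hp : f p ≠ ⊤)
    (h : ∀ q, q ≠ p → f p ≤ fplus f q + ((γ * drho ρ p q : ℝ) : EReal)) :
    nslope f ρ p ≤ γ := by
  rw [nslope, if_neg hp]
  refine iSup₂_le fun q hq => (equot_le_iff (drho_pos hρ hq.symm)).2 (max_le ?_ ?_)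
  · rw [EReal.sub_le_iff_le_add (.inr (EReal.coe_ne_top _)) (.inr (EReal.coe_ne_bot _)),
      add_comm]
    exact h q hq
  · exact_mod_cast mul_nonneg hγ (drho_nonneg p q)

theorem le_uss {ρ : ℝ} (hρ : 0 < ρ) {γ : EReal}
    (h : ∀ p : X × Y, dist p.1 xbar < ρ → 0 < f p → f p < ρ → γ ≤ nslope f ρ p) :
    γ ≤ uss f xbar ybar :=
  le_iSup₂_of_le ρ hρ (le_iInf₂ fun p hp => h p hp.1 hp.2.1 hp.2.2)

theorem exists_lt_nslope_of_lt_uss {γ : EReal} (h : γ < uss f xbar ybar) :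
    ∃ ρ > 0, ∀ p : X × Y, dist p.1 xbar < ρ → 0 < f p → f p < ρ → γ < nslope f ρ p := by
  obtain ⟨ρ, hρ⟩ := lt_iSup_iff.1 h
  obtain ⟨hρ0, hlt⟩ := lt_iSup_iff.1 hρ
  exact ⟨ρ, hρ0, fun p h1 h2 h3 => hlt.trans_le (iInf₂_le p ⟨h1, h2, h3⟩)⟩

theorem uss_nonneg (hS : (Sf f ybar).Nonempty) : 0 ≤ uss f xbar ybar := by
  obtain ⟨w, hw⟩ := hS
  simpa using le_uss (f := f) (xbar := xbar) (ybar := ybar) one_pos (γ := ((0 : ℝ) : EReal))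
    fun p _ hfp _ => le_nslope_of_nonpos (q := (w, ybar)) hfp hw (by simpa using hfp.le)

theorem erMod_le_uss (hS : (Sf f ybar).Nonempty) (hP2 : P2 f ybar) :
    erMod f xbar ybar ≤ uss f xbar ybar := by
  refine EReal.ge_of_forall_gt_iff_ge.1 fun γ hγ => ?_
  rcases le_or_gt γ 0 with hγ0 | hγ0
  · exact (EReal.coe_nonpos.2 hγ0).trans (uss_nonneg hS)
  obtain ⟨δ, hδ, hEr⟩ := exists_mul_infDist_lt_of_lt_erMod hγ
  obtain ⟨c, hc, σ, hσ, hc_le⟩ := hP2.exists_mul_dist_le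
  have hρσ : min δ (min σ (c / γ)) ≤ σ := (min_le_right _ _).trans (min_le_left _ _)
  have hρc : min δ (min σ (c / γ)) ≤ c / γ := (min_le_right _ _).trans (min_le_right _ _)
  refine le_uss (ρ := min δ (min σ (c / γ))) (by positivity) fun p hpx hp hpρ => ?_
  obtain ⟨F, hF⟩ : ∃ F : ℝ, f p = F := ⟨_, (EReal.coe_toReal hpρ.ne_top (ne_bot_of_gt hp)).symm⟩
  have hdS := hEr p (hpx.trans_le (min_le_left _ _)) hp
  have hdy := hc_le p hp (hpρ.trans_le (by exact_mod_cast hρσ))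
  rw [hF] at hdS hdy
  norm_cast at hdS hdy
  obtain ⟨w, hw, hpw⟩ := (infDist_lt_iff hS).1 ((lt_div_iff₀' hγ0).2 hdS)
  refine le_nslope_of_nonpos (q := (w, ybar)) hp hw ?_
  rw [hF, EReal.coe_le_coe_iff, ← le_div_iff₀' hγ0]
  refine max_le hpw.le ?_
  calc min δ (min σ (c / γ)) * dist p.2 ybar ≤ c / γ * dist p.2 ybar :=
        mul_le_mul_of_nonneg_right hρc dist_nonneg
    _ = c * dist p.2 ybar / γ := by ring
    _ ≤ F / γ := div_le_div_of_nonneg_right hdy hγ0.le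

theorem mul_infDist_le_of_forall_lt_nslope [CompleteSpace X]
    [CompleteSpace Y] (hP1 : P1 f ybar) {γ ρ F₀ : ℝ} (hγ : 0 < γ) (hρ : 0 < ρ) {p₀ : X × Y}
    (hF₀ : f p₀ = F₀) (hF₀pos : 0 < F₀)
    (hlsc : LowerSemicontinuousOn (fplus f) {u | drho ρ p₀ u ≤ 2 * (F₀ / γ)})
    (hslope : ∀ q, drho ρ p₀ q ≤ F₀ / γ → 0 < f q → f q ≤ F₀ → (γ : EReal) < nslope f ρ q) :
    γ * infDist p₀.1 (Sf f ybar) ≤ F₀ := by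
  have hfplus₀ : fplus f p₀ = F₀ := by
    rw [fplus, hF₀]
    exact max_eq_left (by exact_mod_cast hF₀pos.le)
  obtain ⟨q, -, hq₀, hqmin⟩ := exists_drho_ekeland_point
    (isClosed_le (continuous_drho p₀) continuous_const) hlsc (fun u _ => le_max_right _ _) hγ hρ
    (show drho ρ p₀ p₀ ≤ _ by rw [drho_self]; positivity)
    (by rw [hfplus₀]; exact EReal.coe_ne_top F₀)
  have hfplus_nonneg : ∀ u, (0 : EReal) ≤ fplus f u := fun u => le_max_right _ _
  have hdq : drho ρ p₀ q ≤ F₀ / γ := by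
    rw [le_div_iff₀' hγ, ← EReal.coe_le_coe_iff, ← hfplus₀]
    exact (le_add_of_nonneg_left (hfplus_nonneg q)).trans hq₀
  by_contra! hlt
  rcases le_or_gt (f q) 0 with hq0 | hq0
  · have hqS : q.1 ∈ Sf f ybar := by
      have hqy : q.2 = ybar := by_contra fun h => (hP1 q h).not_ge hq0
      show f (q.1, ybar) ≤ 0
      rwa [← hqy]
    have hdS := (infDist_le_dist_of_mem hqS).trans ((dist_fst_le_drho p₀ q).trans hdq)
    rw [le_div_iff₀' hγ] at hdS
    linarith
  have hfplus_q : fplus f q = f q := max_eq_left hq0.le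
  have hfq : f q ≤ F₀ := by
    rw [← hfplus_q, ← hfplus₀]
    exact (le_add_of_nonneg_right
      (EReal.coe_nonneg.2 (mul_nonneg hγ.le (drho_nonneg p₀ q)))).trans hq₀
  refine (hslope q hdq hq0 hfq).not_ge
    (nslope_le hρ hγ.le (ne_top_of_le_ne_top (EReal.coe_ne_top F₀) hfq) fun u _ => ?_)
  rw [← hfplus_q]
  -- outside the `d_ρ`-ball of radius `2 F₀ / γ`, already `f q ≤ F₀ < γ d_ρ(q, u)`
  by_cases huW : drho ρ p₀ u ≤ 2 * (F₀ / γ)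
  · exact hqmin u huW
  have hfar : F₀ < γ * drho ρ q u := by
    rw [← div_lt_iff₀' hγ]
    linarith [drho_triangle hρ.le p₀ q u]
  calc fplus f q ≤ F₀ := hfplus_q ▸ hfq
    _ ≤ ((γ * drho ρ q u : ℝ) : EReal) := by exact_mod_cast hfar.le
    _ ≤ fplus f u + ((γ * drho ρ q u : ℝ) : EReal) := le_add_of_nonneg_left (hfplus_nonneg u)

theorem uss_le_erMod [CompleteSpace X] [CompleteSpace Y]
    (hxbar : xbar ∈ Sf f ybar) (hP1 : P1 f ybar) (hP2 : P2 f ybar)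
    (hlsc : ∃ U ∈ 𝓝 (xbar, ybar), LowerSemicontinuousOn (fplus f) U) :
    uss f xbar ybar ≤ erMod f xbar ybar := by
  refine EReal.ge_of_forall_gt_iff_ge.1 fun γ hγ => ?_
  rcases le_or_gt γ 0 with hγ0 | hγ0
  · exact (EReal.coe_nonpos.2 hγ0).trans erMod_nonneg
  obtain ⟨ρ, hρ, hslope⟩ := exists_lt_nslope_of_lt_uss hγ
  obtain ⟨c, hc, σ, hσ, hc_le⟩ := hP2.exists_mul_dist_le
  obtain ⟨U, hU, hlscU⟩ := hlsc
  obtain ⟨r, hr, hrU⟩ := Metric.mem_nhds_iff.1 hU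
  -- `δ` keeps the `d_ρ`-ball of radius `2 f p₀ / γ` inside `U` and its points in the `ρ`-region
  obtain ⟨δ, ⟨h3δ, hrδ, hσδ, h2δ, hρδ⟩, hδ⟩ := ((eventually_mul_lt_nhdsGT 3 hr).and <|
    (eventually_mul_lt_nhdsGT (2 / ρ + γ / c) hr).and <| (eventually_mul_lt_nhdsGT γ hσ).and <|
    (eventually_mul_lt_nhdsGT 2 hρ).and (eventually_mul_lt_nhdsGT γ hρ)).and
    self_mem_nhdsWithin |>.exists
  refine le_erMod ⟨δ, hδ, fun p₀ hp₀ hfp₀ => ?_⟩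
  rcases le_or_gt ((γ * infDist p₀.1 (Sf f ybar) : ℝ) : EReal) (f p₀) with h | hlt
  · exact h
  obtain ⟨F₀, hF₀⟩ : ∃ F₀ : ℝ, f p₀ = F₀ :=
    ⟨_, (EReal.coe_toReal hlt.ne_top (ne_bot_of_gt hfp₀)).symm⟩
  rw [hF₀, EReal.coe_lt_coe_iff] at hlt
  have hF₀pos : 0 < F₀ := by
    rw [hF₀] at hfp₀
    exact_mod_cast hfp₀
  have hF₀δ : F₀ < γ * δ := hlt.trans_le <| mul_le_mul_of_nonneg_left
    ((infDist_le_dist_of_mem hxbar).trans hp₀.le) hγ0.le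
  have htδ : F₀ / γ < δ := (div_lt_iff₀' hγ0).2 hF₀δ
  have hy₀ : c * dist p₀.2 ybar ≤ F₀ := by
    have := hc_le p₀ hfp₀ (by rw [hF₀]; exact_mod_cast hF₀δ.trans hσδ)
    rwa [hF₀, EReal.coe_le_coe_iff] at this
  rw [hF₀, EReal.coe_le_coe_iff]
  refine mul_infDist_le_of_forall_lt_nslope hP1 hγ0 hρ hF₀ hF₀pos (hlscU.mono fun u hu => ?_)
    fun q hq hfq hfqF => hslope q ?_ hfq (hfqF.trans_lt (by exact_mod_cast hF₀δ.trans hρδ))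
  · refine hrU (dist_lt_of_drho_le hρ hu (by linarith) ?_)
    calc dist p₀.2 ybar + 2 * (F₀ / γ) / ρ ≤ γ * δ / c + 2 * δ / ρ := by
          gcongr
          exact (le_div_iff₀' hc).2 (hy₀.trans hF₀δ.le)
      _ = (2 / ρ + γ / c) * δ := by ring
      _ < r := hrδ
  · calc dist q.1 xbar ≤ dist p₀.1 q.1 + dist p₀.1 xbar := dist_triangle_left _ _ _
      _ < δ + δ := add_lt_add_of_le_of_lt ((dist_fst_le_drho p₀ q).trans (hq.trans htδ.le)) hp₀
      _ < ρ := by linarith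

end Slopes

theorem statement9_general {X Y : Type*} [MetricSpace X] [CompleteSpace X] [MetricSpace Y] [CompleteSpace Y]
    (f : X × Y → EReal) (xbar : X) (ybar : Y)
    (h0 : f (xbar, ybar) = 0)
    (hP1 : P1 f ybar) (hP2 : P2 f ybar)
    (hlsc : ∃ U ∈ 𝓝 (xbar, ybar), LowerSemicontinuousOn (fplus f) U) :
    erMod f xbar ybar = uss f xbar ybar := by
  have hxbar : xbar ∈ Sf f ybar := h0.le
  exact le_antisymm (erMod_le_uss ⟨xbar, hxbar⟩ hP2) (uss_le_erMod hxbar hP1 hP2 hlsc)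

/-- if `X`, `Y` are complete and `f₊` is lower semicontinuous near `(xbar,ybar)`,
then under (P1)-(P2), `Er f(xbar,ybar) = \overline{|∇f|}^◇(xbar,ybar)`. -/
theorem statement9 {X Y : Type*} [MetricSpace X] [CompleteSpace X] [MetricSpace Y] [CompleteSpace Y]
    (f : X × Y → EReal) (xbar : X) (ybar : Y)
    (hbot : ∀ p, f p ≠ ⊥) (h0 : f (xbar, ybar) = 0)
    (hP1 : P1 f ybar) (hP2 : P2 f ybar)
    (hlsc : ∃ U ∈ 𝓝 (xbar, ybar), LowerSemicontinuousOn (fplus f) U) :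
    erMod f xbar ybar = uss f xbar ybar :=
  statement9_general f xbar ybar h0 hP1 hP2 hlsc

end HolderPaper
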